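/- arXiv:0706.0578 — 2 statements merged into one kernel-verified Lean document; each statement's English description precedes it below -/
import Mathlib

section
/- Let G and H be finite simple graphs and let f be a graph homomorphism from G to H, i.e., a map from the vertices of G to the vertices of H such that for every edge {i,j} of G, f(i) ≠ f(j) and {f(i), f(j)} is an edge of H (in particular such an f exists whenever H is obtained from G by a sequence of identifications of non-adjacent vertices). If G has a Nullstellensatz certificate for non-3-colorability of degree d, then H has a Nullstellensatz certificate for non-3-colorability of degree at most d, obtained by the variable substitution x_i ↦ x_{f(i)}. Consequently, if every certificate for H has degree at least k, then every certificate for G has degree at least k. -/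
/-! Substituting `x_i ↦ x_{f i}` maps the generators `x_i³ - 1` of `G` to those of `H`,
and the edge generators of `G` to edge generators of `H`, because `f` is a homomorphism
and `x_a² + x_a x_b + x_b²` is symmetric in `a, b`. Collecting the substituted
coefficients over the fibres of `f` (on vertices and on edges) gives a certificate for `H`;
substitution does not raise total degree. -/

open Finset MvPolynomial

/-- The edge set of `G`, as ordered pairs `(i, j)` with `i < j`. -/
def edgePairs {n : ℕ} (G : SimpleGraph (Fin n)) [DecidableRel G.Adj] :
    Finset (Fin n × Fin n) :=
  Finset.univ.filter fun p => p.1 < p.2 ∧ G.Adj p.1 p.2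

/-- A Nullstellensatz certificate for non-3-colorability of `G`: polynomials
`(P_i)_{i∈V}` and `(P_{ij})_{{i,j}∈E}` with
`1 = Σ_i P_i (x_i³ − 1) + Σ_{{i,j}∈E} P_{ij} (x_i² + x_i x_j + x_j²)`. -/
def IsColorCert {n : ℕ} (G : SimpleGraph (Fin n)) [DecidableRel G.Adj]
    (P : Fin n → MvPolynomial (Fin n) ℂ)
    (Pe : Fin n × Fin n → MvPolynomial (Fin n) ℂ) : Prop :=
  (1 : MvPolynomial (Fin n) ℂ) =
    (∑ i : Fin n, P i * (X i ^ 3 - 1)) +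
    ∑ p ∈ edgePairs G, Pe p * (X p.1 ^ 2 + X p.1 * X p.2 + X p.2 ^ 2)

/-- The degree of a non-3-colorability certificate: the maximum of the total degrees of
the coefficient polynomials. -/
def colorCertDeg {n : ℕ} (G : SimpleGraph (Fin n)) [DecidableRel G.Adj]
    (P : Fin n → MvPolynomial (Fin n) ℂ)
    (Pe : Fin n × Fin n → MvPolynomial (Fin n) ℂ) : ℕ :=
  max (Finset.univ.sup fun i => (P i).totalDegree)
    ((edgePairs G).sup fun p => (Pe p).totalDegree)

theorem Finset.sum_fiberwise_mul_of_maps_to {ι κ R : Type*} [CommSemiring R] [DecidableEq κ]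
    {s : Finset ι} {t : Finset κ} {g : ι → κ} (h : ∀ i ∈ s, g i ∈ t)
    (a : ι → R) (b : κ → R) :
    ∑ j ∈ t, (∑ i ∈ s with g i = j, a i) * b j = ∑ i ∈ s, a i * b (g i) := by
  calc
    _ = ∑ j ∈ t, ∑ i ∈ s with g i = j, a i * b (g i) :=
        sum_congr rfl fun j _ => by
          rw [sum_mul]
          exact sum_congr rfl fun _ hi => by rw [(mem_filter.1 hi).2]
    _ = _ := sum_fiberwise_of_maps_to h _

theorem MvPolynomial.totalDegree_sum_rename_le {σ τ ι κ R : Type*} [CommSemiring R]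
    [DecidableEq κ] (f : σ → τ) (s : Finset ι) (g : ι → κ) (P : ι → MvPolynomial σ R)
    (j : κ) :
    (∑ i ∈ s with g i = j, rename f (P i)).totalDegree ≤ s.sup fun i => (P i).totalDegree :=
  totalDegree_finsetSum_le fun _ hi =>
    (totalDegree_rename_le f _).trans
      (le_sup (f := fun i => (P i).totalDegree) (mem_filter.1 hi).1)

theorem MvPolynomial.sq_add_mul_add_sq_X_min_max {σ R : Type*} [LinearOrder σ] [CommSemiring R]
    (a b : σ) :
    (X (min a b) ^ 2 + X (min a b) * X (max a b) + X (max a b) ^ 2 : MvPolynomial σ R) =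
      X a ^ 2 + X a * X b + X b ^ 2 := by
  rcases le_total a b with hab | hba
  · rw [min_eq_left hab, max_eq_right hab]
  · rw [min_eq_right hba, max_eq_left hba]
    ring

section Transfer

variable {m n : ℕ} {G : SimpleGraph (Fin m)} {H : SimpleGraph (Fin n)}
  [DecidableRel G.Adj] [DecidableRel H.Adj]

def edgeImage (f : Fin m → Fin n) (p : Fin m × Fin m) : Fin n × Fin n :=
  (min (f p.1) (f p.2), max (f p.1) (f p.2))

theorem edgeImage_mem_edgePairs (φ : G →g H) {p : Fin m × Fin m} (hp : p ∈ edgePairs G) :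
    edgeImage φ p ∈ edgePairs H := by
  simp only [edgePairs, mem_filter, mem_univ, true_and] at hp ⊢
  have hadj := φ.map_rel hp.2
  refine ⟨min_lt_max.2 hadj.ne, ?_⟩
  rcases le_total (φ p.1) (φ p.2) with h | h
  · simpa [edgeImage, min_eq_left h, max_eq_right h] using hadj
  · simpa [edgeImage, min_eq_right h, max_eq_left h] using hadj.symm

variable (f : Fin m → Fin n) (G)

noncomputable def pushVertexCoeff (P : Fin m → MvPolynomial (Fin m) ℂ) (j : Fin n) :
    MvPolynomial (Fin n) ℂ :=
  ∑ i with f i = j, rename f (P i)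

noncomputable def pushEdgeCoeff (Pe : Fin m × Fin m → MvPolynomial (Fin m) ℂ)
    (q : Fin n × Fin n) : MvPolynomial (Fin n) ℂ :=
  ∑ p ∈ edgePairs G with edgeImage f p = q, rename f (Pe p)

theorem colorCertDeg_push_le (P : Fin m → MvPolynomial (Fin m) ℂ)
    (Pe : Fin m × Fin m → MvPolynomial (Fin m) ℂ) :
    colorCertDeg H (pushVertexCoeff f P) (pushEdgeCoeff G f Pe) ≤ colorCertDeg G P Pe :=
  max_le_max (Finset.sup_le fun j _ => totalDegree_sum_rename_le f _ _ _ j)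
    (Finset.sup_le fun q _ => totalDegree_sum_rename_le f _ _ _ q)

variable {G}

theorem IsColorCert.push (φ : G →g H) {P : Fin m → MvPolynomial (Fin m) ℂ}
    {Pe : Fin m × Fin m → MvPolynomial (Fin m) ℂ} (h : IsColorCert G P Pe) :
    IsColorCert H (pushVertexCoeff φ P) (pushEdgeCoeff G φ Pe) := by
  have h' := congrArg (rename φ) h
  simp only [map_one, map_add, map_sum, map_mul, map_sub, map_pow, rename_X] at h'
  unfold IsColorCert pushVertexCoeff pushEdgeCoeff
  rw [sum_fiberwise_mul_of_maps_to (fun _ _ => mem_univ _),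
    sum_fiberwise_mul_of_maps_to fun _ => edgeImage_mem_edgePairs φ]
  simpa only [edgeImage, sq_add_mul_add_sq_X_min_max] using h'

end Transfer

/-- Let `f` be a graph homomorphism from `G` to `H` (for every edge
`{i,j}` of `G`, `f i ≠ f j` and `{f i, f j}` is an edge of `H`). If `G` has a
Nullstellensatz certificate for non-3-colorability of degree `d`, then `H` has one of
degree at most `d`.  Consequently, if every certificate for `H` has degree at least `k`,
then every certificate for `G` has degree at least `k`. -/
theorem certificate_transfers_along_homomorphism (m n : ℕ)
    (G : SimpleGraph (Fin m)) (H : SimpleGraph (Fin n))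
    [DecidableRel G.Adj] [DecidableRel H.Adj]
    (f : Fin m → Fin n)
    (hf : ∀ i j : Fin m, G.Adj i j → f i ≠ f j ∧ H.Adj (f i) (f j)) :
    (∀ (P : Fin m → MvPolynomial (Fin m) ℂ)
        (Pe : Fin m × Fin m → MvPolynomial (Fin m) ℂ),
        IsColorCert G P Pe →
        ∃ (P' : Fin n → MvPolynomial (Fin n) ℂ)
          (Pe' : Fin n × Fin n → MvPolynomial (Fin n) ℂ),
          IsColorCert H P' Pe' ∧ colorCertDeg H P' Pe' ≤ colorCertDeg G P Pe) ∧
    (∀ k : ℕ,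
      (∀ (P' : Fin n → MvPolynomial (Fin n) ℂ)
          (Pe' : Fin n × Fin n → MvPolynomial (Fin n) ℂ),
          IsColorCert H P' Pe' → k ≤ colorCertDeg H P' Pe') →
      ∀ (P : Fin m → MvPolynomial (Fin m) ℂ)
          (Pe : Fin m × Fin m → MvPolynomial (Fin m) ℂ),
          IsColorCert G P Pe → k ≤ colorCertDeg G P Pe) := by
  let φ : G →g H := ⟨f, fun hij => (hf _ _ hij).2⟩
  have transfer : ∀ P Pe, IsColorCert G P Pe → ∃ P' Pe',
      IsColorCert H P' Pe' ∧ colorCertDeg H P' Pe' ≤ colorCertDeg G P Pe :=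
    fun P Pe h => ⟨_, _, h.push φ, colorCertDeg_push_le G φ P Pe⟩
  refine ⟨transfer, fun k hk P Pe h => ?_⟩
  obtain ⟨P', Pe', h', hdeg⟩ := transfer P Pe h
  exact (hk P' Pe' h').trans hdeg
end

section
/- Let G be a finite simple graph that contains as a subgraph either a complete graph K_n with n ≥ 4, or an odd wheel W_m (a cycle of odd length m ≥ 3 together with an additional hub vertex adjacent to every cycle vertex). Then G is not 3-colorable, G has a Nullstellensatz certificate for non-3-colorability of degree exactly four, and every Nullstellensatz certificate for non-3-colorability of G has degree at least four; hence the minimum degree of a Nullstellensatz certificate for non-3-colorability of G is exactly four. -/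
open Finset MvPolynomial

namespace SimpleGraph

variable {n : ℕ} (G : SimpleGraph (Fin n)) [DecidableRel G.Adj]

def colorIdealDeg (d : ℕ) : Submodule ℂ (MvPolynomial (Fin n) ℂ) where
  carrier := {g | ∃ (P : Fin n → MvPolynomial (Fin n) ℂ)
    (Pe : Fin n × Fin n → MvPolynomial (Fin n) ℂ),
    (∀ i, (P i).totalDegree ≤ d) ∧ (∀ p, (Pe p).totalDegree ≤ d) ∧
    g = (∑ i, P i * (X i ^ 3 - 1)) +
      ∑ p ∈ edgePairs G, Pe p * (X p.1 ^ 2 + X p.1 * X p.2 + X p.2 ^ 2)}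
  zero_mem' := ⟨0, 0, by simp, by simp, by simp⟩
  add_mem' := by
    rintro _ _ ⟨P, Pe, hP, hPe, rfl⟩ ⟨P', Pe', hP', hPe', rfl⟩
    refine ⟨P + P', Pe + Pe', fun i => ?_, fun p => ?_, ?_⟩
    · exact (totalDegree_add _ _).trans (max_le (hP i) (hP' i))
    · exact (totalDegree_add _ _).trans (max_le (hPe p) (hPe' p))
    · simp only [Pi.add_apply, add_mul, sum_add_distrib]
      ring
  smul_mem' := by
    rintro c _ ⟨P, Pe, hP, hPe, rfl⟩
    refine ⟨c • P, c • Pe, fun i => (totalDegree_smul_le c _).trans (hP i),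
      fun p => (totalDegree_smul_le c _).trans (hPe p), ?_⟩
    simp only [Pi.smul_apply, smul_add, smul_sum, smul_mul_assoc]

variable {G}

theorem exists_isColorCert_of_one_mem {d : ℕ} (h : 1 ∈ G.colorIdealDeg d) :
    ∃ P Pe, IsColorCert G P Pe ∧ colorCertDeg G P Pe ≤ d := by
  obtain ⟨P, Pe, hP, hPe, hcert⟩ := h
  exact ⟨P, Pe, hcert, max_le (Finset.sup_le fun i _ => hP i) (Finset.sup_le fun p _ => hPe p)⟩

theorem mul_mem_colorIdealDeg {d e : ℕ} {q g : MvPolynomial (Fin n) ℂ}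
    (hq : q.totalDegree ≤ e) (hg : g ∈ G.colorIdealDeg d) : q * g ∈ G.colorIdealDeg (d + e) := by
  obtain ⟨P, Pe, hP, hPe, rfl⟩ := hg
  refine ⟨q • P, q • Pe, fun i => ?_, fun p => ?_, ?_⟩
  · exact (totalDegree_mul _ _).trans (add_comm e d ▸ add_le_add hq (hP i))
  · exact (totalDegree_mul _ _).trans (add_comm e d ▸ add_le_add hq (hPe p))
  · simp only [Pi.smul_apply, smul_eq_mul, mul_add, mul_sum, mul_assoc]

theorem mul_vertex_mem_colorIdealDeg {d : ℕ} {q : MvPolynomial (Fin n) ℂ}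
    (hq : q.totalDegree ≤ d) (i : Fin n) : q * (X i ^ 3 - 1) ∈ G.colorIdealDeg d := by
  classical
  refine ⟨Pi.single i q, 0, fun j => ?_, by simp, by simp [Pi.single_apply]⟩
  rcases eq_or_ne j i with rfl | hj <;> simp [*]

theorem mul_edge_mem_colorIdealDeg {d : ℕ} {q : MvPolynomial (Fin n) ℂ}
    (hq : q.totalDegree ≤ d) {i j : Fin n} (hadj : G.Adj i j) :
    q * (X i ^ 2 + X i * X j + X j ^ 2) ∈ G.colorIdealDeg d := by
  classical
  wlog hij : i < j generalizing i j
  · convert this hadj.symm (hadj.ne.symm.lt_of_le (not_lt.mp hij)) using 1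
    ring
  have hmem : (i, j) ∈ edgePairs G := by simp [edgePairs, hij, hadj]
  refine ⟨0, Pi.single (i, j) q, by simp, fun p => ?_, ?_⟩
  · rcases eq_or_ne p (i, j) with rfl | hp <;> simp [*]
  · simp [Pi.single_apply, hmem]

theorem mem_colorIdealDeg_of_sub_mul_mem {d : ℕ} {i j : Fin n} (hadj : G.Adj i j)
    {g : MvPolynomial (Fin n) ℂ} (hg : g.totalDegree ≤ d + 1)
    (h : (X i - X j) * g ∈ G.colorIdealDeg d) : g ∈ G.colorIdealDeg (d + 2) := by
  have hXi := mul_mem_colorIdealDeg (totalDegree_X i).le h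
  have hXj := mul_mem_colorIdealDeg (totalDegree_X j).le h
  have hsq : 3 * (X j ^ 2 * g) ∈ G.colorIdealDeg (d + 1) := by
    have := sub_mem (mul_edge_mem_colorIdealDeg hg hadj) (add_mem hXi (add_mem hXj hXj))
    convert this using 1
    ring
  have hthree : 3 * g ∈ G.colorIdealDeg (d + 2) := by
    have := sub_mem (mul_mem_colorIdealDeg (totalDegree_X j).le hsq)
      (Submodule.smul_mem _ (3 : ℂ) (mul_vertex_mem_colorIdealDeg (hg.trans (by omega)) j))
    convert this using 1
    rw [smul_eq_C_mul, map_ofNat]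
    ring
  convert Submodule.smul_mem _ (1 / 3 : ℂ) hthree using 1
  rw [smul_eq_C_mul, ← mul_assoc, ← map_ofNat C 3, ← map_mul]
  norm_num

theorem one_mem_colorIdealDeg_of_sub_mem {i j : Fin n} (hadj : G.Adj i j)
    (h : X i - X j ∈ G.colorIdealDeg 2) : 1 ∈ G.colorIdealDeg 4 :=
  mem_colorIdealDeg_of_sub_mul_mem hadj (by simp) (by simpa using h)

theorem add_add_mem_colorIdealDeg {a b c : Fin n} (hab : G.Adj a b) (hac : G.Adj a c)
    (hbc : G.Adj b c) : X a + X b + X c ∈ G.colorIdealDeg 2 := by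
  refine mem_colorIdealDeg_of_sub_mul_mem hbc ?_ ?_
  · refine (totalDegree_add _ _).trans (max_le ((totalDegree_add _ _).trans (max_le ?_ ?_)) ?_) <;>
      simp
  · convert sub_mem (mul_edge_mem_colorIdealDeg (q := 1) (by simp) hab)
      (mul_edge_mem_colorIdealDeg (q := 1) (by simp) hac) using 1
    ring

theorem one_mem_colorIdealDeg_of_isClique {S : Finset (Fin n)} (hS : 4 ≤ #S)
    (hclique : G.IsClique (S : Set (Fin n))) : 1 ∈ G.colorIdealDeg 4 := by
  obtain ⟨a, ha⟩ : S.Nonempty := card_pos.mp (by omega)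
  obtain ⟨b, hb, c, hc, d, hd, hbc, hbd, hcd⟩ :=
    two_lt_card.mp (by rw [card_erase_of_mem ha]; omega)
  rw [mem_erase] at hb hc hd
  have had : G.Adj a d := hclique ha hd.2 (Ne.symm hd.1)
  refine one_mem_colorIdealDeg_of_sub_mem (hclique hb.2 hc.2 hbc) ?_
  convert sub_mem
    (add_add_mem_colorIdealDeg (hclique hb.2 ha hb.1) (hclique hb.2 hd.2 hbd) had)
    (add_add_mem_colorIdealDeg (hclique hc.2 ha hc.1) (hclique hc.2 hd.2 hcd) had) using 1
  ring

theorem sub_mem_colorIdealDeg_of_closedWalk_hub (u : ℕ → Fin n) (hub : Fin n) (k : ℕ)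
    (hclosed : u (2 * k + 1) = u 0) (hwalk : ∀ t, G.Adj (u t) (u (t + 1)))
    (hhub : ∀ t, G.Adj (u t) hub) : X (u 1) - X (u 0) ∈ G.colorIdealDeg 2 := by
  have htri t : X (u t) + X (u (t + 1)) + X hub ∈ G.colorIdealDeg 2 :=
    add_add_mem_colorIdealDeg (hwalk t) (hhub t) (hhub (t + 1))
  have hsum := Submodule.sum_mem _ fun t (_ : t ∈ range k) =>
    sub_mem (htri (2 * t + 1)) (htri (2 * t + 2))
  convert hsum using 1
  rw [← hclosed, ← sum_range_sub' fun t => (X (u (2 * t + 1)) : MvPolynomial (Fin n) ℂ)]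
  refine sum_congr rfl fun t _ => ?_
  rw [show 2 * (t + 1) + 1 = 2 * t + 2 + 1 by ring]
  ring

open Fin.NatCast in
theorem one_mem_colorIdealDeg_of_oddWheel {L : ℕ} [NeZero L] (hodd : Odd L) (f : Fin L → Fin n)
    (hub : Fin n) (hcycle : ∀ t, G.Adj (f t) (f (t + 1))) (hhub : ∀ t, G.Adj hub (f t)) :
    1 ∈ G.colorIdealDeg 4 := by
  obtain ⟨k, rfl⟩ := hodd
  refine one_mem_colorIdealDeg_of_sub_mem (hcycle 0).symm ?_
  simpa using sub_mem_colorIdealDeg_of_closedWalk_hub (fun t => f t) hub k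
    (by simp) (fun t => by simpa using hcycle t) (fun t => (hhub t).symm)

end SimpleGraph

namespace Nullstellensatz

variable {n : ℕ}

def residueCount (k : ℕ) (α : Fin n →₀ ℕ) : ℕ := #{v | α v % 3 = k}

def countWeight : ℕ → ℕ → ℤ
  | 0, 0 => 2
  | 1, 1 => -1
  | 3, 0 => 2
  | _, _ => 0

def monomialWeight (α : Fin n →₀ ℕ) : ℤ := countWeight (residueCount 1 α) (residueCount 2 α)

theorem residueCount_add_two_mul_le (α : Fin n →₀ ℕ) :
    residueCount 1 α + 2 * residueCount 2 α ≤ ∑ v, α v := by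
  simp only [residueCount, card_filter, mul_sum, ← sum_add_distrib]
  refine sum_le_sum fun v _ => ?_
  split_ifs <;> omega

theorem monomialWeight_add_single_three (α : Fin n →₀ ℕ) (i : Fin n) :
    monomialWeight (α + Finsupp.single i 3) = monomialWeight α := by
  have h v : (α + Finsupp.single i 3 : Fin n →₀ ℕ) v % 3 = α v % 3 := by
    rcases eq_or_ne i v with rfl | hv <;> simp [*]
  simp only [monomialWeight, residueCount, h]

def offCount (k : ℕ) (i j : Fin n) (α : Fin n →₀ ℕ) : ℕ :=
  #{v ∈ (univ.erase i).erase j | α v % 3 = k}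

theorem residueCount_eq_offCount {i j : Fin n} (hij : i ≠ j) (k : ℕ) (α : Fin n →₀ ℕ) :
    residueCount k α = offCount k i j α +
      ((if α i % 3 = k then 1 else 0) + if α j % 3 = k then 1 else 0) := by
  simp only [residueCount, offCount, card_filter]
  rw [← add_sum_erase _ _ (mem_univ i),
    ← add_sum_erase _ _ (mem_erase.2 ⟨hij.symm, mem_univ j⟩)]
  ring

theorem offCount_congr (k : ℕ) (i j : Fin n) {α β : Fin n →₀ ℕ}
    (h : ∀ v, v ≠ i → v ≠ j → α v = β v) : offCount k i j α = offCount k i j β := by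
  refine congrArg card (filter_congr fun v hv => ?_)
  rw [mem_erase, mem_erase] at hv
  rw [h v hv.2.1 hv.1]

def edgeWeight (A₁ A₂ a b : ℕ) : ℤ :=
  countWeight (A₁ + ((if a % 3 = 1 then 1 else 0) + if b % 3 = 1 then 1 else 0))
    (A₂ + ((if a % 3 = 2 then 1 else 0) + if b % 3 = 2 then 1 else 0))

theorem edgeWeight_congr (A₁ A₂ : ℕ) {a b a' b' : ℕ} (ha : a % 3 = a' % 3)
    (hb : b % 3 = b' % 3) :
    edgeWeight A₁ A₂ a b = edgeWeight A₁ A₂ a' b' := by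
  simp only [edgeWeight, ha, hb]

theorem monomialWeight_eq_edgeWeight {i j : Fin n} (hij : i ≠ j) {α β : Fin n →₀ ℕ}
    (hβ : ∀ v, v ≠ i → v ≠ j → β v = α v) :
    monomialWeight β = edgeWeight (offCount 1 i j α) (offCount 2 i j α) (β i) (β j) := by
  rw [monomialWeight, residueCount_eq_offCount hij, residueCount_eq_offCount hij, edgeWeight,
    offCount_congr 1 i j hβ, offCount_congr 2 i j hβ]

theorem edgeWeight_table : ∀ a < 3, ∀ b < 3, ∀ A₁ ≤ 3, ∀ A₂ ≤ 1, a + b + A₁ + 2 * A₂ ≤ 3 →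
    edgeWeight A₁ A₂ (a + 2) b + edgeWeight A₁ A₂ (a + 1) (b + 1) +
      edgeWeight A₁ A₂ a (b + 2) = 0 := by
  decide

theorem monomialWeight_edge {i j : Fin n} (hij : i ≠ j) (α : Fin n →₀ ℕ) (hα : ∑ v, α v ≤ 3) :
    monomialWeight (α + Finsupp.single i 2) +
      monomialWeight (α + Finsupp.single i 1 + Finsupp.single j 1) +
      monomialWeight (α + Finsupp.single j 2) = 0 := by
  have hbound := residueCount_add_two_mul_le α
  rw [residueCount_eq_offCount hij, residueCount_eq_offCount hij] at hbound
  have key := edgeWeight_table (α i % 3) (by omega) (α j % 3) (by omega) (offCount 1 i j α)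
    (by split_ifs at hbound <;> omega) (offCount 2 i j α) (by split_ifs at hbound <;> omega)
    (by split_ifs at hbound <;> omega)
  have hw (β : Fin n →₀ ℕ) (hβ : ∀ v, v ≠ i → v ≠ j → β v = α v) (a b : ℕ)
      (ha : β i % 3 = a % 3) (hb : β j % 3 = b % 3) :
      monomialWeight β = edgeWeight (offCount 1 i j α) (offCount 2 i j α) a b :=
    (monomialWeight_eq_edgeWeight hij hβ).trans (edgeWeight_congr _ _ ha hb)
  rw [hw _ (fun v hvi _ => by simp [Ne.symm hvi]) (α i % 3 + 2) (α j % 3)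
      (by simp) (by simp [hij.symm]),
    hw _ (fun v hvi hvj => by simp [Ne.symm hvi, Ne.symm hvj]) (α i % 3 + 1) (α j % 3 + 1)
      (by simp [hij.symm]) (by simp [hij]),
    hw _ (fun v _ hvj => by simp [Ne.symm hvj]) (α i % 3) (α j % 3 + 2)
      (by simp [hij.symm]) (by simp)]
  exact key

noncomputable def dualCert : MvPolynomial (Fin n) ℂ →ₗ[ℂ] ℂ :=
  (basisMonomials (Fin n) ℂ).constr ℂ fun α => (monomialWeight α : ℂ)

theorem dualCert_monomial (α : Fin n →₀ ℕ) (c : ℂ) :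
    dualCert (monomial α c) = c * monomialWeight α := by
  have h := (basisMonomials (Fin n) ℂ).constr_basis ℂ (fun α => (monomialWeight α : ℂ)) α
  rw [coe_basisMonomials] at h
  rw [show monomial α c = c • monomial α 1 by rw [smul_monomial, smul_eq_mul, mul_one], map_smul,
    dualCert, h, smul_eq_mul]

theorem dualCert_one : dualCert (1 : MvPolynomial (Fin n) ℂ) = 2 := by
  rw [← C_1, C_apply, dualCert_monomial]
  simp [monomialWeight, residueCount, countWeight]

theorem dualCert_mul (p q : MvPolynomial (Fin n) ℂ) :
    dualCert (p * q) = ∑ α ∈ p.support, coeff α p * dualCert (monomial α 1 * q) := by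
  conv_lhs => rw [p.as_sum, sum_mul, map_sum]
  refine sum_congr rfl fun α _ => ?_
  rw [← smul_eq_mul (coeff α p), ← map_smul, smul_eq_C_mul, ← mul_assoc, C_mul_monomial,
    mul_one]

theorem dualCert_mul_vertex (p : MvPolynomial (Fin n) ℂ) (i : Fin n) :
    dualCert (p * (X i ^ 3 - 1)) = 0 := by
  rw [dualCert_mul]
  refine sum_eq_zero fun α _ => ?_
  rw [mul_sub, mul_one, X_pow_eq_monomial, monomial_mul, mul_one, map_sub, dualCert_monomial,
    dualCert_monomial, monomialWeight_add_single_three, sub_self, mul_zero]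

theorem dualCert_mul_edge {i j : Fin n} (hij : i ≠ j) {p : MvPolynomial (Fin n) ℂ}
    (hp : p.totalDegree ≤ 3) : dualCert (p * (X i ^ 2 + X i * X j + X j ^ 2)) = 0 := by
  rw [dualCert_mul]
  refine sum_eq_zero fun α hα => ?_
  have hdeg : ∑ v, α v ≤ 3 := by
    simpa [Finsupp.sum_fintype] using (le_totalDegree hα).trans hp
  have hX (v : Fin n) : (X v : MvPolynomial (Fin n) ℂ) = monomial (Finsupp.single v 1) 1 := rfl
  have hw := congrArg (Int.cast : ℤ → ℂ) (monomialWeight_edge hij α hdeg)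
  push_cast at hw
  rw [X_pow_eq_monomial, X_pow_eq_monomial, hX i, hX j]
  simp only [monomial_mul, mul_add, map_add, dualCert_monomial, mul_one, one_mul, ← add_assoc]
  rw [← mul_add, ← mul_add, hw, mul_zero]

end Nullstellensatz

theorem sq_add_mul_add_sq_eq_zero_of_pow_three_eq {R : Type*} [CommRing R] [IsDomain R]
    {x y : R} (h : x ^ 3 = y ^ 3) (hne : x ≠ y) : x ^ 2 + x * y + y ^ 2 = 0 := by
  have : (x - y) * (x ^ 2 + x * y + y ^ 2) = 0 := by linear_combination h
  exact (mul_eq_zero.mp this).resolve_left (sub_ne_zero.mpr hne)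

namespace IsColorCert

open Nullstellensatz

variable {n : ℕ} {G : SimpleGraph (Fin n)} [DecidableRel G.Adj]
  {P : Fin n → MvPolynomial (Fin n) ℂ} {Pe : Fin n × Fin n → MvPolynomial (Fin n) ℂ}

theorem not_colorable_three (hc : IsColorCert G P Pe) : ¬ G.Colorable 3 := by
  rintro ⟨col⟩
  obtain ⟨ω, hω⟩ : ∃ ω : ℂ, IsPrimitiveRoot ω 3 :=
    ⟨_, Complex.isPrimitiveRoot_exp 3 three_ne_zero⟩
  set z : Fin n → ℂ := fun v => ω ^ (col v : ℕ)
  have hz v : z v ^ 3 = 1 := by rw [← pow_mul, mul_comm, pow_mul, hω.pow_eq_one, one_pow]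
  have hedge {i j : Fin n} (hadj : G.Adj i j) : z i ^ 2 + z i * z j + z j ^ 2 = 0 :=
    sq_add_mul_add_sq_eq_zero_of_pow_three_eq ((hz i).trans (hz j).symm) fun h =>
      col.valid hadj (Fin.ext (hω.pow_inj (col i).isLt (col j).isLt h))
  have := congrArg (aeval z) hc
  simp only [map_one, map_add, map_sum, map_mul, map_sub, map_pow, aeval_X, hz, sub_self,
    mul_zero, sum_const_zero, zero_add] at this
  rw [sum_eq_zero fun p hp => by rw [hedge (mem_filter.mp hp).2.2, mul_zero]] at this
  exact one_ne_zero this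

theorem four_le_colorCertDeg (hc : IsColorCert G P Pe) : 4 ≤ colorCertDeg G P Pe := by
  by_contra! hlt
  have hPe p (hp : p ∈ edgePairs G) : (Pe p).totalDegree ≤ 3 := by
    have : (Pe p).totalDegree ≤ colorCertDeg G P Pe :=
      (le_sup (f := fun p => (Pe p).totalDegree) hp).trans (le_max_right _ _)
    omega
  have := congrArg dualCert hc
  rw [dualCert_one, map_add, map_sum, map_sum, sum_eq_zero fun i _ => dualCert_mul_vertex _ i,
    sum_eq_zero fun p hp => dualCert_mul_edge (mem_filter.mp hp).2.1.ne (hPe p hp)] at this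
  norm_num at this

end IsColorCert

/-- If a finite simple graph `G` contains as a subgraph either a complete
graph on at least 4 vertices (a clique of size ≥ 4) or an odd wheel (an odd cycle of
length `≥ 3` together with a hub vertex adjacent to every cycle vertex), then `G` is not
3-colorable, `G` has a Nullstellensatz certificate for non-3-colorability of degree
exactly four, and every such certificate has degree at least four; hence the minimum
certificate degree is exactly four. -/
theorem clique_or_oddWheel_certificate_degree_four (n : ℕ) (G : SimpleGraph (Fin n))
    [DecidableRel G.Adj]
    (h : (∃ S : Finset (Fin n), 4 ≤ S.card ∧ ∀ i ∈ S, ∀ j ∈ S, i ≠ j → G.Adj i j) ∨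
      (∃ m : ℕ, Odd (m + 3) ∧
        ∃ (f : Fin (m + 3) → Fin n) (hub : Fin n),
          Function.Injective f ∧
          (∀ t : Fin (m + 3), G.Adj (f t) (f (t + 1))) ∧
          (∀ t : Fin (m + 3), hub ≠ f t) ∧
          (∀ t : Fin (m + 3), G.Adj hub (f t)))) :
    ¬ G.Colorable 3 ∧
    (∃ (P : Fin n → MvPolynomial (Fin n) ℂ)
        (Pe : Fin n × Fin n → MvPolynomial (Fin n) ℂ),
        IsColorCert G P Pe ∧ colorCertDeg G P Pe = 4) ∧
    (∀ (P : Fin n → MvPolynomial (Fin n) ℂ)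
        (Pe : Fin n × Fin n → MvPolynomial (Fin n) ℂ),
        IsColorCert G P Pe → 4 ≤ colorCertDeg G P Pe) := by
  have hone : 1 ∈ G.colorIdealDeg 4 := by
    rcases h with ⟨S, hcard, hclique⟩ | ⟨m, hodd, f, hub, -, hcycle, -, hhub⟩
    · exact SimpleGraph.one_mem_colorIdealDeg_of_isClique hcard fun i hi j hj => hclique i hi j hj
    · exact SimpleGraph.one_mem_colorIdealDeg_of_oddWheel hodd f hub hcycle hhub
  obtain ⟨P, Pe, hcert, hdeg⟩ := SimpleGraph.exists_isColorCert_of_one_mem hone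
  exact ⟨hcert.not_colorable_three, ⟨P, Pe, hcert, hdeg.antisymm hcert.four_le_colorCertDeg⟩,
    fun _ _ => IsColorCert.four_le_colorCertDeg⟩
end
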